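/- arXiv:2401.17753 — 4 statements merged into one kernel-verified Lean document; each statement's English description precedes it below -/
import Mathlib

section
/- Let A be a unital C*-algebra, h a Hilbert space, and E = h ⊗ A the free right Hilbert A-module. Then the internal n-fold tensor power E^n (with respect to any left A-action) is isomorphic as a right Hilbert A-module to h^{⊗n} ⊗ A. In particular, every elementary tensor v₁ ⊗ ... ⊗ vₙ with vᵢ ∈ E can be written in the form Σ_k w_k A_k with w_k ∈ h^{⊗n} and A_k ∈ A. -/
/-- Let `A` be a unital C*-algebra, `h` a Hilbert space and `E = h ⊗ A`
the free right Hilbert `A`-module (presented by an embedding `wemb : h → E` whose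
`A`-orbit is dense).  Let `En` be the internal `n`-fold tensor power of `E` (with respect
to any left `A`-action `lactE`), presented by the elementary-tensor map
`temb : (Fin (m+1) → E) → En` which is continuous and linear in each slot, satisfies the
balanced relation `… ⊗ (vᵢ·a) ⊗ v_{i+1} ⊗ … = … ⊗ vᵢ ⊗ (a·v_{i+1}) ⊗ …`, the right
action acting in the last slot, and whose span is dense.  Then `En ≅ h^{⊗n} ⊗ A` as a
right module in the sense that the closed span of the tensors with entries in `h`,
multiplied on the right by `A`, is all of `En`; in particular every elementary tensor
`v₁ ⊗ … ⊗ vₙ` is a limit of sums `Σ_k w_k·A_k` with `w_k ∈ h^{⊗n}`, `A_k ∈ A`. -/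
theorem statement5 {A : Type*} [CStarAlgebra A]
    {h : Type*} [NormedAddCommGroup h] [InnerProductSpace ℂ h]
    {E : Type*} [NormedAddCommGroup E] [NormedSpace ℂ E]
    (rsmulE : E → A → E) (lactE : A → E → E) (wemb : h →ₗ[ℂ] E)
    -- E is the free module h ⊗ A:
    (h_free : ∀ f : E, f ∈ closure
      ((Submodule.span ℂ {x : E | ∃ (w : h) (a : A), x = rsmulE (wemb w) a} : Submodule ℂ E) : Set E))
    -- the internal (m+1)-fold tensor power En of E:
    (m : ℕ) {En : Type*} [NormedAddCommGroup En] [NormedSpace ℂ En]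
    (temb : (Fin (m + 1) → E) → En) (rsmuln : En → A → En)
    (temb_add : ∀ (v : Fin (m + 1) → E) (i : Fin (m + 1)) (x y : E),
      temb (Function.update v i (x + y)) = temb (Function.update v i x) + temb (Function.update v i y))
    (temb_smul : ∀ (v : Fin (m + 1) → E) (i : Fin (m + 1)) (c : ℂ) (x : E),
      temb (Function.update v i (c • x)) = c • temb (Function.update v i x))
    (temb_cont : ∀ (v : Fin (m + 1) → E) (i : Fin (m + 1)),
      Continuous fun x : E => temb (Function.update v i x))
    -- the balanced relation: (v·a) in slot i = (a·v) in slot i+1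
    (temb_balanced : ∀ (v : Fin (m + 1) → E) (i j : Fin (m + 1)), (j : ℕ) = (i : ℕ) + 1 →
      ∀ a : A, temb (Function.update v i (rsmulE (v i) a)) = temb (Function.update v j (lactE a (v j))))
    -- the right A-action on En acts in the last slot
    (h_rsmuln : ∀ (v : Fin (m + 1) → E) (a : A),
      rsmuln (temb v) a = temb (Function.update v (Fin.last m) (rsmulE (v (Fin.last m)) a)))
    -- elementary tensors span a dense subspace of En
    (temb_dense : ∀ x : En, x ∈ closure
      ((Submodule.span ℂ (Set.range temb) : Submodule ℂ En) : Set En)) :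
    ∀ x : En, x ∈ closure
      ((Submodule.span ℂ {y : En | ∃ (w : Fin (m + 1) → h) (a : A),
        y = rsmuln (temb fun i => wemb (w i)) a} : Submodule ℂ En) : Set En) := by

  classical
  set S : Set En := {y : En | ∃ (w : Fin (m + 1) → h) (a : A),
        y = rsmuln (temb fun i => wemb (w i)) a} with hS
  set Csub : Submodule ℂ En := (Submodule.span ℂ S).topologicalClosure with hCdef
  have hCclosed : IsClosed (Csub : Set En) := Submodule.isClosed_topologicalClosure _
  -- mapping lemma: if slot i of v lies in the closed span of T and all generators map into
  -- Csub, then `temb v ∈ Csub`.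
  have map_lemma : ∀ (v : Fin (m+1) → E) (i : Fin (m+1)) (T : Set E),
      v i ∈ closure ((Submodule.span ℂ T : Submodule ℂ E) : Set E) →
      (∀ t ∈ T, temb (Function.update v i t) ∈ Csub) →
      temb v ∈ Csub := by
    intro v i T hvT hgen
    let F : E →ₗ[ℂ] En :=
      { toFun := fun x => temb (Function.update v i x)
        map_add' := fun x y => temb_add v i x y
        map_smul' := fun c x => temb_smul v i c x }
    have hFc : Continuous F := temb_cont v i
    have hspan : Submodule.span ℂ T ≤ Csub.comap F := Submodule.span_le.mpr hgen
    have hclos : closure ((Submodule.span ℂ T : Submodule ℂ E) : Set E) ⊆ F ⁻¹' (Csub : Set En) :=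
      closure_minimal hspan (hCclosed.preimage hFc)
    have := hclos hvT
    simpa [F, Function.update_eq_self] using this
  have key : ∀ d : ℕ, d ≤ m → ∀ v : Fin (m+1) → E,
      (∀ i : Fin (m+1), (i : ℕ) < m - d → v i ∈ Set.range wemb) → temb v ∈ Csub := by
    intro d
    induction d with
    | zero =>
      intro _ v hv
      apply map_lemma v (Fin.last m) _ (h_free (v (Fin.last m)))
      rintro t ⟨w, a, rfl⟩
      set u : Fin (m+1) → E := Function.update v (Fin.last m) (wemb w) with hu
      have hurange : ∀ i : Fin (m+1), ∃ wi : h, u i = wemb wi := by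
        intro i
        by_cases hi : i = Fin.last m
        · subst hi; exact ⟨w, by simp [hu]⟩
        · have hlt : (i : ℕ) < m := by
            have := i.isLt
            have : (i : ℕ) ≠ m := fun hc => hi (Fin.ext hc)
            omega
          obtain ⟨wi, hwi⟩ := hv i (by simpa using hlt)
          exact ⟨wi, by simp [hu, Function.update_of_ne hi, hwi.symm]⟩
      choose w' hw' using hurange
      have huw : u = fun i => wemb (w' i) := funext hw'
      have h1 : Function.update v (Fin.last m) (rsmulE (wemb w) a)
          = Function.update u (Fin.last m) (rsmulE (u (Fin.last m)) a) := by
        simp [hu, Function.update_idem]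
      rw [h1, ← h_rsmuln u a]
      have hmemS : rsmuln (temb u) a ∈ S := ⟨w', a, by rw [huw]⟩
      exact Submodule.le_topologicalClosure _ (Submodule.subset_span hmemS)
    | succ d ih =>
      intro hdm v hv
      have hk1 : m - (d+1) + 1 = m - d := by omega
      set k : ℕ := m - (d+1) with hkdef
      have hklt : k < m := by omega
      let i : Fin (m+1) := ⟨k, by omega⟩
      let j : Fin (m+1) := ⟨k+1, by omega⟩
      apply map_lemma v i _ (h_free (v i))
      rintro t ⟨w, a, rfl⟩
      set v' : Fin (m+1) → E := Function.update v i (wemb w) with hv'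
      have h1 : Function.update v i (rsmulE (wemb w) a)
          = Function.update v' i (rsmulE (v' i) a) := by
        simp [hv', Function.update_idem]
      rw [h1, temb_balanced v' i j rfl a]
      apply ih (by omega)
      intro i' hi'
      have hi'k : (i' : ℕ) < k + 1 := by omega
      have hij : i' ≠ j := by
        intro hc
        have : (i' : ℕ) = k + 1 := by rw [hc]
        omega
      rw [Function.update_of_ne hij]
      by_cases hik : i' = i
      · subst hik; exact ⟨w, by simp [hv']⟩
      · have hvne : (i' : ℕ) ≠ k := fun hc => hik (Fin.ext hc)
        rw [hv', Function.update_of_ne hik]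
        exact hv i' (by omega)
  have hmem : ∀ v, temb v ∈ Csub := by
    intro v
    exact key m le_rfl v (fun i hi => absurd hi (by omega))
  have hrange : Set.range temb ⊆ (Csub : Set En) := by rintro _ ⟨v, rfl⟩; exact hmem v
  have hspan2 : Submodule.span ℂ (Set.range temb) ≤ Csub := Submodule.span_le.mpr hrange
  have hfinal : closure ((Submodule.span ℂ (Set.range temb) : Submodule ℂ En) : Set En)
      ⊆ (Csub : Set En) := closure_minimal hspan2 hCclosed
  intro x
  have := hfinal (temb_dense x)
  simpa [hCdef, Submodule.topologicalClosure_coe] using this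
end

section
/- Let E = h ⊗ A be a free Hilbert A-bimodule with G-twist u, and let f = Σ_i f_i γ_i ∈ E_∘ (f_i ∈ h, γ_i ∈ G). Then for any antisymmetric tensor v_- = w_- A ∈ E^n_- with w_- ∈ h^{∧n}, the contraction ⟨f| v_- = (1/n) Σ_{i,k} (−1)^{k−1} ⟨f_i, w_k⟩ · ((u_{γ_i}^* w₁) ∧ ... ∧ \widehat{(u_{γ_i}^* w_k)} ∧ ... ∧ (u_{γ_i}^* wₙ)) · (γ_i^* A) lies in E^{n−1}_-; hence the fermionic Fock bimodule is stable under all annihilation operators a(f), f ∈ E_∘. -/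
lemma decomposeFin_fst {n : ℕ} (π : Equiv.Perm (Fin (n + 1))) :
    (Equiv.Perm.decomposeFin π).1 = π 0 := by
  rcases hq : Equiv.Perm.decomposeFin π with ⟨p, e⟩
  have hπ : π = Equiv.Perm.decomposeFin.symm (p, e) := by
    rw [← hq, Equiv.symm_apply_apply]
  rw [hπ, Equiv.Perm.decomposeFin_symm_apply_zero]

lemma decomposeFin_symm_zero_snd {n : ℕ} (π : Equiv.Perm (Fin (n + 1))) (hπ : π 0 = 0) :
    Equiv.Perm.decomposeFin.symm (0, (Equiv.Perm.decomposeFin π).2) = π := by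
  have h1 : (Equiv.Perm.decomposeFin π).1 = 0 := by rw [decomposeFin_fst, hπ]
  conv_lhs => rw [← h1, Prod.mk.eta, Equiv.symm_apply_apply]

/-- Bijection `(k, σ) ↦ ρ` with `ρ 0 = k`, `ρ j.succ = k.succAbove (σ j)`. -/
def finPermEquiv (n : ℕ) :
    Fin (n + 1) × Equiv.Perm (Fin n) ≃ Equiv.Perm (Fin (n + 1)) where
  toFun p := (Fin.cycleRange p.1)⁻¹ * Equiv.Perm.decomposeFin.symm (0, p.2)
  invFun ρ := (ρ 0, (Equiv.Perm.decomposeFin ((Fin.cycleRange (ρ 0)) * ρ)).2)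
  left_inv := by
    rintro ⟨k, σ⟩
    have h0 : ((Fin.cycleRange k)⁻¹ * Equiv.Perm.decomposeFin.symm (0, σ)) 0 = k := by
      simp [Equiv.Perm.mul_apply, Equiv.Perm.inv_def]
    show (_, _) = (k, σ)
    simp only [h0, mul_inv_cancel_left, Equiv.apply_symm_apply]
  right_inv := by
    intro ρ
    show (Fin.cycleRange (ρ 0))⁻¹ *
      Equiv.Perm.decomposeFin.symm
        (0, (Equiv.Perm.decomposeFin ((Fin.cycleRange (ρ 0)) * ρ)).2) = ρ
    rw [decomposeFin_symm_zero_snd _ (by rw [Equiv.Perm.mul_apply, Fin.cycleRange_self]),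
      inv_mul_cancel_left]

lemma finPermEquiv_apply_zero (n : ℕ) (k : Fin (n + 1)) (σ : Equiv.Perm (Fin n)) :
    finPermEquiv n (k, σ) 0 = k := by
  simp [finPermEquiv, Equiv.Perm.mul_apply, Equiv.Perm.inv_def]

lemma finPermEquiv_apply_succ (n : ℕ) (k : Fin (n + 1)) (σ : Equiv.Perm (Fin n)) (j : Fin n) :
    finPermEquiv n (k, σ) j.succ = k.succAbove (σ j) := by
  simp [finPermEquiv, Equiv.Perm.mul_apply, Equiv.Perm.decomposeFin_symm_apply_succ,
    Equiv.Perm.inv_def]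

lemma finPermEquiv_sign (n : ℕ) (k : Fin (n + 1)) (σ : Equiv.Perm (Fin n)) :
    ((Equiv.Perm.sign (finPermEquiv n (k, σ)) : ℤ) : ℂ)
      = (-1 : ℂ) ^ (k : ℕ) * ((Equiv.Perm.sign σ : ℤ) : ℂ) := by
  have h : Equiv.Perm.sign (finPermEquiv n (k, σ))
      = (-1) ^ (k : ℕ) * Equiv.Perm.sign σ := by
    simp [finPermEquiv, Equiv.Perm.decomposeFin.symm_sign, Fin.sign_cycleRange, inv_pow]
  rw [h]
  push_cast
  ring


open scoped InnerProductSpace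

/-- The antisymmetrization projection `P₋ⁿ = (n!)⁻¹ Σ_ρ ε_ρ U_ρ` built from a family of
permutation operators. -/
noncomputable def antisymmetrizer {Fn : Type*} [NormedAddCommGroup Fn] [NormedSpace ℂ Fn]
    (n : ℕ) (Uperm : Equiv.Perm (Fin n) → Fn →L[ℂ] Fn) : Fn →L[ℂ] Fn :=
  ((n.factorial : ℂ))⁻¹ • ∑ ρ : Equiv.Perm (Fin n), ((Equiv.Perm.sign ρ : ℤ) : ℂ) • Uperm ρ

/-- Let `E = h ⊗ A` be a free Hilbert `A`-bimodule with `G`-twist `u`,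
and `f = Σ_i f_i γ_i ∈ E₀` (`f_i ∈ h`, `γ_i ∈ G`).  Then for any antisymmetric tensor
`v₋ = w₋ a ∈ E^{n+1}₋` (`w₋ = P₋^{n+1}(w₀⊗…⊗wₙ)`) the contraction `⟨f| v₋` equals
`(1/(n+1)) Σ_{i,k} (−1)^k ⟨f_i, w_k⟩ ((u_{γ_i}* w₀) ∧ … (omit k) … ∧ (u_{γ_i}* wₙ))·(γ_i* a)`,
which lies in `Eⁿ₋`; hence the fermionic Fock bimodule is stable under all annihilation
operators `a(f)`, `f ∈ E₀`. -/
theorem statement13 {A : Type*} [CStarAlgebra A]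
    {h : Type*} [NormedAddCommGroup h] [InnerProductSpace ℂ h]
    (G : Set A) (hG_unit : ∀ γ ∈ G, γ ∈ unitary A) (hG_star : ∀ γ ∈ G, star γ ∈ G)
    (u : A → (h ≃ₗᵢ[ℂ] h))
    -- the graded pieces Eⁿ and E^{n+1} of the Fock bimodule
    (n : ℕ) {Fn Fn1 : Type*} [NormedAddCommGroup Fn] [NormedSpace ℂ Fn]
    [NormedAddCommGroup Fn1] [NormedSpace ℂ Fn1]
    (temb : (Fin n → h) → A → Fn) (temb1 : (Fin (n + 1) → h) → A → Fn1)
    (Uperm : Equiv.Perm (Fin n) → Fn →L[ℂ] Fn)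
    (Uperm1 : Equiv.Perm (Fin (n + 1)) → Fn1 →L[ℂ] Fn1)
    (hU : ∀ (ρ : Equiv.Perm (Fin n)) (w : Fin n → h) (a : A),
      Uperm ρ (temb w a) = temb (w ∘ ρ) a)
    (hU1 : ∀ (ρ : Equiv.Perm (Fin (n + 1))) (w : Fin (n + 1) → h) (a : A),
      Uperm1 ρ (temb1 w a) = temb1 (w ∘ ρ) a)
    -- the G-twisted left action on Eⁿ
    (lact : A → Fn →L[ℂ] Fn)
    (hlact : ∀ γ ∈ G, ∀ (w : Fin n → h) (a : A),
      lact γ (temb w a) = temb (fun i => u γ (w i)) (γ * a))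
    -- contraction by a vector of h: ⟨v|(w₀⊗…⊗wₙ ⊗ a) = ⟨v,w₀⟩ (w₁⊗…⊗wₙ ⊗ a)
    (cntr : h → Fn1 →L[ℂ] Fn)
    (hcntr : ∀ (v : h) (w : Fin (n + 1) → h) (a : A),
      cntr v (temb1 w a) = ⟪v, w 0⟫_ℂ • temb (fun j => w j.succ) a)
    -- f = Σ_i f_i γ_i ∈ E₀, a finite sum with f_i ∈ h, γ_i ∈ G
    (m : ℕ) (f : Fin m → h) (γ : Fin m → A) (hγ : ∀ i, γ i ∈ G)
    (w : Fin (n + 1) → h) (a : A) :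
    (∑ i, lact (star (γ i)) (cntr (f i) (antisymmetrizer (n + 1) Uperm1 (temb1 w a)))) =
      (((n : ℂ) + 1)⁻¹) •
        ∑ i, ∑ k : Fin (n + 1),
          (((-1 : ℂ) ^ (k : ℕ)) * ⟪f i, w k⟫_ℂ) •
            antisymmetrizer n Uperm
              (temb (fun j => u (star (γ i)) (w (k.succAbove j))) (star (γ i) * a)) ∧
    (∑ i, lact (star (γ i)) (cntr (f i) (antisymmetrizer (n + 1) Uperm1 (temb1 w a))))
      ∈ Set.range (antisymmetrizer n Uperm) := by
  classical
  have hγ' : ∀ i, star (γ i) ∈ G := fun i => hG_star _ (hγ i)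
  have hPn : ∀ (W : Fin n → h) (b : A),
      antisymmetrizer n Uperm (temb W b)
        = ((n.factorial : ℂ))⁻¹ • ∑ σ : Equiv.Perm (Fin n),
            ((Equiv.Perm.sign σ : ℤ) : ℂ) • temb (W ∘ σ) b := by
    intro W b
    simp [antisymmetrizer, ContinuousLinearMap.sum_apply, hU]
  have hPn1 : antisymmetrizer (n + 1) Uperm1 (temb1 w a)
      = (((n + 1).factorial : ℂ))⁻¹ • ∑ ρ : Equiv.Perm (Fin (n + 1)),
          ((Equiv.Perm.sign ρ : ℤ) : ℂ) • temb1 (w ∘ ρ) a := by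
    simp [antisymmetrizer, ContinuousLinearMap.sum_apply, hU1]
  have hc : (((n + 1).factorial : ℂ))⁻¹ = ((n : ℂ) + 1)⁻¹ * ((n.factorial : ℂ))⁻¹ := by
    rw [Nat.factorial_succ]
    push_cast
    rw [mul_inv]
  have key : ∀ i,
      lact (star (γ i)) (cntr (f i) (antisymmetrizer (n + 1) Uperm1 (temb1 w a)))
        = ∑ k : Fin (n + 1),
            (((n : ℂ) + 1)⁻¹ * ((-1 : ℂ) ^ (k : ℕ) * ⟪f i, w k⟫_ℂ)) •
              antisymmetrizer n Uperm
                (temb (fun j => u (star (γ i)) (w (k.succAbove j))) (star (γ i) * a)) := by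
    intro i
    have hstep : lact (star (γ i)) (cntr (f i) (antisymmetrizer (n + 1) Uperm1 (temb1 w a)))
        = (((n + 1).factorial : ℂ))⁻¹ • ∑ ρ : Equiv.Perm (Fin (n + 1)),
            (((Equiv.Perm.sign ρ : ℤ) : ℂ) * ⟪f i, w (ρ 0)⟫_ℂ) •
              temb (fun j => u (star (γ i)) (w (ρ j.succ))) (star (γ i) * a) := by
      rw [hPn1, map_smul, map_smul, map_sum, map_sum]
      congr 1
      refine Finset.sum_congr rfl fun ρ _ => ?_
      rw [map_smul, hcntr, map_smul, map_smul, hlact _ (hγ' i)]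
      simp only [Function.comp_apply, smul_smul]
    have hstep2 : ∀ k : Fin (n + 1),
        (((n : ℂ) + 1)⁻¹ * ((-1 : ℂ) ^ (k : ℕ) * ⟪f i, w k⟫_ℂ)) •
            antisymmetrizer n Uperm
              (temb (fun j => u (star (γ i)) (w (k.succAbove j))) (star (γ i) * a))
          = (((n + 1).factorial : ℂ))⁻¹ • ∑ σ : Equiv.Perm (Fin n),
              (((-1 : ℂ) ^ (k : ℕ) * ((Equiv.Perm.sign σ : ℤ) : ℂ)) * ⟪f i, w k⟫_ℂ) •
                temb (fun j => u (star (γ i)) (w (k.succAbove (σ j)))) (star (γ i) * a) := by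
      intro k
      rw [hPn, hc, smul_smul, Finset.smul_sum, Finset.smul_sum]
      refine Finset.sum_congr rfl fun σ _ => ?_
      rw [smul_smul, smul_smul]
      congr 1
      ring
    rw [hstep, funext hstep2, ← Finset.smul_sum]
    congr 1
    rw [← Equiv.sum_comp (finPermEquiv n)
      (fun ρ : Equiv.Perm (Fin (n + 1)) =>
        (((Equiv.Perm.sign ρ : ℤ) : ℂ) * ⟪f i, w (ρ 0)⟫_ℂ) •
          temb (fun j => u (star (γ i)) (w (ρ j.succ))) (star (γ i) * a)),
      Fintype.sum_prod_type]
    refine Finset.sum_congr rfl fun k _ => Finset.sum_congr rfl fun σ _ => ?_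
    rw [finPermEquiv_sign]
    congr 2
    · rw [finPermEquiv_apply_zero]
    · ext j
      rw [finPermEquiv_apply_succ]
  constructor
  · rw [Finset.smul_sum]
    refine Finset.sum_congr rfl fun i _ => ?_
    rw [key i, Finset.smul_sum]
    refine Finset.sum_congr rfl fun k _ => ?_
    rw [smul_smul]
  · refine ⟨∑ i, ∑ k : Fin (n + 1),
      (((n : ℂ) + 1)⁻¹ * ((-1 : ℂ) ^ (k : ℕ) * ⟪f i, w k⟫_ℂ)) •
        temb (fun j => u (star (γ i)) (w (k.succAbove j))) (star (γ i) * a), ?_⟩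
    rw [map_sum]
    refine Finset.sum_congr rfl fun i _ => ?_
    rw [map_sum, key i]
    refine Finset.sum_congr rfl fun k _ => ?_
    rw [map_smul]
end

section
/- Let E = h ⊗ A be a free Hilbert A-bimodule with G-twist u, and f, g ∈ E_∘ written as f = Σ_i f_i γ_i, g = Σ_h g_h γ'_h, satisfying the mutual freeness condition '⋈_∘': [γ_i, γ'_h] = 0, u_{γ_i} g_h = g_h, and u_{γ'_h} f_i = f_i for all i, h. Then the fermionic creation operators anticommute: a_-^*(f) a_-^*(g) + a_-^*(g) a_-^*(f) = 0 on F_-(E). -/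
open scoped InnerProductSpace

/-! Each `crt (f i) ∘L lact (γ i)` is a creation operator followed by a group element. By the
twist relation, a group element fixing a vector commutes with the creation operator of that
vector, so the freeness conditions let the group elements of one summand pass the creation
operator of the other; after that only the anticommutation of `crt (f i)` and `crt (g j)` is
left, and the anticommutator is bilinear in the two sums. -/

section Anticommute

variable {R : Type*}

theorem mul_mul_add_mul_mul_eq_zero [NonUnitalSemiring R] {c₁ c₂ l₁ l₂ : R}
    (hc : c₁ * c₂ + c₂ * c₁ = 0) (h₁ : Commute l₁ c₂) (h₂ : Commute l₂ c₁)
    (hl : Commute l₁ l₂) :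
    c₁ * l₁ * (c₂ * l₂) + c₂ * l₂ * (c₁ * l₁) = 0 := by
  calc c₁ * l₁ * (c₂ * l₂) + c₂ * l₂ * (c₁ * l₁)
      = c₁ * (l₁ * c₂) * l₂ + c₂ * (l₂ * c₁) * l₁ := by simp only [mul_assoc]
    _ = c₁ * c₂ * (l₁ * l₂) + c₂ * c₁ * (l₂ * l₁) := by
        rw [h₁.eq, h₂.eq]; simp only [mul_assoc]
    _ = (c₁ * c₂ + c₂ * c₁) * (l₁ * l₂) := by rw [hl.eq, add_mul]
    _ = 0 := by rw [hc, zero_mul]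

theorem sum_mul_sum_add_sum_mul_sum_eq_zero [NonUnitalNonAssocSemiring R]
    {ι κ : Type*} (s : Finset ι) (t : Finset κ) (x : ι → R) (y : κ → R)
    (hxy : ∀ i ∈ s, ∀ j ∈ t, x i * y j + y j * x i = 0) :
    (∑ i ∈ s, x i) * (∑ j ∈ t, y j) + (∑ j ∈ t, y j) * (∑ i ∈ s, x i) = 0 := by
  rw [Finset.sum_mul_sum, Finset.sum_mul_sum, Finset.sum_comm (s := t), ← Finset.sum_add_distrib]
  refine Finset.sum_eq_zero fun i hi => ?_
  rw [← Finset.sum_add_distrib]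
  exact Finset.sum_eq_zero fun j hj => hxy i hi j hj

end Anticommute

theorem statement15_general {A : Type*} [CStarAlgebra A]
    {h : Type*} [NormedAddCommGroup h] [InnerProductSpace ℂ h]
    -- G ⊆ U(A) a group of unitaries, u : G → U(h) the twist (a group morphism)
    (G : Set A)
    (u : A → (h ≃ₗᵢ[ℂ] h))
    -- the fermionic Fock bimodule F = F₋(E) with left action, creation and annihilation
    {F : Type*} [NormedAddCommGroup F] [NormedSpace ℂ F]
    (lact : A → F →L[ℂ] F) (crt : h → F →L[ℂ] F)
    (lact_mul : ∀ a b : A, lact (a * b) = lact a ∘L lact b)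
    -- the CAR for vectors of h
    (car_crt : ∀ v w : h, crt v ∘L crt w + crt w ∘L crt v = 0)
    -- the twist intertwining relations (Lemma on twists)
    (twist_crt : ∀ γ ∈ G, ∀ v : h, lact γ ∘L crt v = crt (u γ v) ∘L lact γ)
    -- f = Σ_i f_i γ_i and g = Σ_j g_j γ'_j in E₀
    (m m' : ℕ) (f : Fin m → h) (γ : Fin m → A) (hγ : ∀ i, γ i ∈ G)
    (g : Fin m' → h) (γ' : Fin m' → A) (hγ' : ∀ j, γ' j ∈ G)
    -- the mutual freeness condition f ⋈₀ g
    (h_comm : ∀ i j, Commute (γ i) (γ' j))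
    (h_ug : ∀ i j, u (γ i) (g j) = g j)
    (h_uf : ∀ i j, u (γ' j) (f i) = f i) :
    (∑ i, crt (f i) ∘L lact (γ i)) ∘L (∑ j, crt (g j) ∘L lact (γ' j)) +
      (∑ j, crt (g j) ∘L lact (γ' j)) ∘L (∑ i, crt (f i) ∘L lact (γ i)) = 0 := by
  have commute_of_fixed {a : A} (ha : a ∈ G) {v : h} (hv : u a v = v) :
      Commute (lact a) (crt v) := by
    simpa only [Commute, SemiconjBy, ContinuousLinearMap.mul_def, hv] using twist_crt a ha v
  refine sum_mul_sum_add_sum_mul_sum_eq_zero _ _ _ _ fun i _ j _ => ?_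
  refine mul_mul_add_mul_mul_eq_zero (car_crt (f i) (g j)) (commute_of_fixed (hγ i) (h_ug i j))
    (commute_of_fixed (hγ' j) (h_uf i j)) ?_
  simpa only [Commute, SemiconjBy, ContinuousLinearMap.mul_def, lact_mul] using
    congrArg lact (h_comm i j).eq

/-- Let `E = h ⊗ A` be a free Hilbert `A`-bimodule with `G`-twist `u`,
and `f, g ∈ E₀` written as `f = Σ_i f_i γ_i`, `g = Σ_j g_j γ'_j` (with `f_i, g_j ∈ h`,
`γ_i, γ'_j ∈ G`) satisfying the mutual freeness condition `⋈₀`: `[γ_i, γ'_j] = 0`,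
`u_{γ_i} g_j = g_j` and `u_{γ'_j} f_i = f_i` for all `i, j`.  Then the fermionic creation
operators `a₋*(f) = Σ_i a₋*(f_i) λ(γ_i)` and `a₋*(g) = Σ_j a₋*(g_j) λ(γ'_j)` anticommute
on the fermionic Fock bimodule `F₋(E)` (here `F`). -/
theorem statement15 {A : Type*} [CStarAlgebra A]
    {h : Type*} [NormedAddCommGroup h] [InnerProductSpace ℂ h]
    -- G ⊆ U(A) a group of unitaries, u : G → U(h) the twist (a group morphism)
    (G : Set A) (hG_unit : ∀ γ ∈ G, γ ∈ unitary A) (hG_one : (1 : A) ∈ G)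
    (hG_mul : ∀ γ ∈ G, ∀ γ' ∈ G, γ * γ' ∈ G) (hG_star : ∀ γ ∈ G, star γ ∈ G)
    (u : A → (h ≃ₗᵢ[ℂ] h))
    (hu_mul : ∀ γ ∈ G, ∀ γ' ∈ G, ∀ w : h, u (γ * γ') w = u γ (u γ' w))
    (hu_one : ∀ w : h, u 1 w = w)
    (hu_star : ∀ γ ∈ G, ∀ w : h, u (star γ) w = (u γ).symm w)
    -- the fermionic Fock bimodule F = F₋(E) with left action, creation and annihilation
    {F : Type*} [NormedAddCommGroup F] [NormedSpace ℂ F]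
    (lact : A → F →L[ℂ] F) (ann crt : h → F →L[ℂ] F)
    (lact_mul : ∀ a b : A, lact (a * b) = lact a ∘L lact b)
    (lact_one : lact 1 = ContinuousLinearMap.id ℂ F)
    -- the CAR for vectors of h
    (car_crt : ∀ v w : h, crt v ∘L crt w + crt w ∘L crt v = 0)
    (car_ann : ∀ v w : h, ann v ∘L ann w + ann w ∘L ann v = 0)
    (car_mixed : ∀ v w : h,
      ann v ∘L crt w + crt w ∘L ann v = ⟪v, w⟫_ℂ • ContinuousLinearMap.id ℂ F)
    -- the twist intertwining relations (Lemma on twists)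
    (twist_crt : ∀ γ ∈ G, ∀ v : h, lact γ ∘L crt v = crt (u γ v) ∘L lact γ)
    (twist_ann : ∀ γ ∈ G, ∀ v : h, lact γ ∘L ann ((u γ).symm v) = ann v ∘L lact γ)
    -- f = Σ_i f_i γ_i and g = Σ_j g_j γ'_j in E₀
    (m m' : ℕ) (f : Fin m → h) (γ : Fin m → A) (hγ : ∀ i, γ i ∈ G)
    (g : Fin m' → h) (γ' : Fin m' → A) (hγ' : ∀ j, γ' j ∈ G)
    -- the mutual freeness condition f ⋈₀ g
    (h_comm : ∀ i j, Commute (γ i) (γ' j))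
    (h_ug : ∀ i j, u (γ i) (g j) = g j)
    (h_uf : ∀ i j, u (γ' j) (f i) = f i) :
    (∑ i, crt (f i) ∘L lact (γ i)) ∘L (∑ j, crt (g j) ∘L lact (γ' j)) +
      (∑ j, crt (g j) ∘L lact (γ' j)) ∘L (∑ i, crt (f i) ∘L lact (γ i)) = 0 :=
  statement15_general G u lact crt lact_mul car_crt twist_crt m m' f γ hγ g γ' hγ' h_comm h_ug h_uf
end

section
/- Let E = h ⊗ A be a free Hilbert A-bimodule with G-twist u, and κ a conjugation (antiunitary involution) on h commuting with every u_γ, γ ∈ G, extended antilinearly to E_∘ by κ(vA) = (κv)A^*. If f, g ∈ E_∘ satisfy f ⋈_∘ g, then also f ⋈_∘ κg, κg ⋈_∘ f, and κf ⋈_∘ κg; moreover, if f ⋈ g (i.e., the support algebras A(f), A(g) commute and act trivially on the other vector), then ⟨f, κg⟩ = ⟨g, κf⟩. -/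
open scoped InnerProductSpace

/-- The mutual freeness relation `f ⋈₀ g` for elements of `E₀`, expressed in terms of
decompositions `f = Σ_i f_i γ_i`, `g = Σ_j g_j γ'_j` (`f_i, g_j ∈ h`, `γ_i, γ'_j ∈ G`):
all `γ_i` commute with all `γ'_j`, each `u_{γ_i}` fixes every `g_j`, and each `u_{γ'_j}`
fixes every `f_i`. -/
def BowtieCirc {A : Type*} [CStarAlgebra A]
    {h : Type*} [NormedAddCommGroup h] [InnerProductSpace ℂ h]
    (u : A → (h ≃ₗᵢ[ℂ] h)) {m m' : ℕ}
    (f : Fin m → h) (γ : Fin m → A) (g : Fin m' → h) (γ' : Fin m' → A) : Prop :=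
  (∀ i j, Commute (γ i) (γ' j)) ∧ (∀ i j, u (γ i) (g j) = g j) ∧
    (∀ i j, u (γ' j) (f i) = f i)

/-- Let `E = h ⊗ A` be a free Hilbert `A`-bimodule with `G`-twist `u`,
and `κ` a conjugation (antiunitary involution) on `h` commuting with every `u_γ`, `γ ∈ G`,
extended antilinearly to `E₀` by `κ(vγ) = (κv)γ*`.  If `f, g ∈ E₀` satisfy `f ⋈₀ g`
(via decompositions `f = Σ f_i γ_i`, `g = Σ g_j γ'_j`), then also `f ⋈₀ κg`, `κg ⋈₀ f`
and `κf ⋈₀ κg`; moreover, if `f ⋈ g` (here: decompositions `f = Σ w_i A_i`,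
`g = Σ v_j B_j` whose support algebras commute, `[A_i, B_j] = 0`) then
`⟨f, κg⟩ = ⟨g, κf⟩` in `A`. -/
theorem statement18 {A : Type*} [CStarAlgebra A]
    {h : Type*} [NormedAddCommGroup h] [InnerProductSpace ℂ h]
    (G : Set A) (hG_unit : ∀ γ ∈ G, γ ∈ unitary A) (hG_star : ∀ γ ∈ G, star γ ∈ G)
    (u : A → (h ≃ₗᵢ[ℂ] h))
    (hu_mul : ∀ γ ∈ G, ∀ γ' ∈ G, ∀ w : h, u (γ * γ') w = u γ (u γ' w))
    (hu_one : ∀ w : h, u 1 w = w)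
    (hu_star : ∀ γ ∈ G, ∀ w : h, u (star γ) w = (u γ).symm w)
    -- κ is a conjugation on h commuting with the twist
    (κ : h → h)
    (hκ_add : ∀ x y : h, κ (x + y) = κ x + κ y)
    (hκ_smul : ∀ (c : ℂ) (x : h), κ (c • x) = (starRingEnd ℂ c) • κ x)
    (hκ_invol : ∀ x : h, κ (κ x) = x)
    (hκ_inner : ∀ x y : h, ⟪κ x, κ y⟫_ℂ = ⟪y, x⟫_ℂ)
    (hκ_u : ∀ γ ∈ G, ∀ x : h, κ (u γ x) = u γ (κ x)) :
    -- (1) stability of ⋈₀ under κ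
    (∀ (m m' : ℕ) (f : Fin m → h) (γ : Fin m → A) (g : Fin m' → h) (γ' : Fin m' → A),
      (∀ i, γ i ∈ G) → (∀ j, γ' j ∈ G) → BowtieCirc u f γ g γ' →
        BowtieCirc u f γ (fun j => κ (g j)) (fun j => star (γ' j)) ∧
        BowtieCirc u (fun j => κ (g j)) (fun j => star (γ' j)) f γ ∧
        BowtieCirc u (fun i => κ (f i)) (fun i => star (γ i))
          (fun j => κ (g j)) (fun j => star (γ' j))) ∧
    -- (2) if f ⋈ g then ⟨f, κg⟩ = ⟨g, κf⟩
    (∀ (m m' : ℕ) (w : Fin m → h) (B : Fin m → A) (v : Fin m' → h) (B' : Fin m' → A),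
      (∀ i j, Commute (B i) (B' j)) →
        (∑ i, ∑ j, ⟪w i, κ (v j)⟫_ℂ • (star (B i) * star (B' j))) =
        (∑ j, ∑ i, ⟪v j, κ (w i)⟫_ℂ • (star (B' j) * star (B i)))) := by
  constructor
  · rintro m m' f γ g γ' hγ hγ' ⟨hc, hug, huf⟩
    have key : ∀ a b : A, Commute a b → b ∈ unitary A → Commute a (star b) := by
      intro a b hab hb
      have h1 : star b * b = 1 := hb.1
      have h2 : b * star b = 1 := hb.2
      show a * star b = star b * a
      calc a * star b = star b * (b * a * star b) := by
            rw [← mul_assoc, ← mul_assoc, h1, one_mul]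
        _ = star b * (a * (b * star b)) := by rw [← hab.eq, mul_assoc]
        _ = star b * a := by rw [h2, mul_one]
    have hcsr : ∀ i j, Commute (γ i) (star (γ' j)) := fun i j =>
      key _ _ (hc i j) (hG_unit _ (hγ' j))
    have hcsl : ∀ i j, Commute (star (γ i)) (γ' j) := fun i j =>
      (key _ _ (hc i j).symm (hG_unit _ (hγ i))).symm
    have hug2 : ∀ i j, u (γ i) (κ (g j)) = κ (g j) := fun i j => by
      rw [← hκ_u _ (hγ i), hug]
    have huf2 : ∀ i j, u (star (γ' j)) (f i) = f i := fun i j => by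
      rw [hu_star _ (hγ' j)]
      exact (u (γ' j)).symm_apply_eq.mpr (huf i j).symm
    have hug3 : ∀ i j, u (star (γ i)) (κ (g j)) = κ (g j) := fun i j => by
      rw [hu_star _ (hγ i)]
      exact (u (γ i)).symm_apply_eq.mpr (hug2 i j).symm
    have huf3 : ∀ i j, u (γ' j) (κ (f i)) = κ (f i) := fun i j => by
      rw [← hκ_u _ (hγ' j), huf]
    have huf4 : ∀ i j, u (star (γ' j)) (κ (f i)) = κ (f i) := fun i j => by
      rw [hu_star _ (hγ' j)]
      exact (u (γ' j)).symm_apply_eq.mpr (huf3 i j).symm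
    exact ⟨⟨fun i j => hcsr i j, fun i j => hug2 i j, fun i j => huf2 i j⟩,
      ⟨fun j i => (hcsr i j).symm, fun j i => huf2 i j, fun j i => hug2 i j⟩,
      ⟨fun i j => key _ _ (hcsl i j) (hG_unit _ (hγ' j)),
        fun i j => hug3 i j, fun i j => huf4 i j⟩⟩
  · intro m m' w B v B' hcomm
    rw [Finset.sum_comm]
    refine Finset.sum_congr rfl fun j _ => Finset.sum_congr rfl fun i _ => ?_
    have hs : ⟪w i, κ (v j)⟫_ℂ = ⟪v j, κ (w i)⟫_ℂ := by
      have := hκ_inner (κ (w i)) (v j)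
      rwa [hκ_invol] at this
    rw [hs]
    congr 1
    rw [← star_mul, ← star_mul, (hcomm i j).eq]
end
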